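/- Let C_X ∈ ℝ^{N×N} be CPD and K ∈ ℝ_{>0}^{N×N} be such that log K (entrywise) is CPD, with both symmetric. Then the function T ↦ −Tr(C_X Tᵀ log(K) T) is concave on the set of couplings U(1_N/N, 1_N/N) = {T ∈ ℝ_+^{N×N} : T 1_N = Tᵀ 1_N = (1/N) 1_N}. -/

import Mathlib

/-!
The function is minus the quadratic form `T ↦ Tr(C Tᵀ L T)` with `L = log K`, so it suffices that
`Tr(C Uᵀ L U) ≥ 0` for every difference `U` of two couplings; such a `U` has zero row and column
sums. Then `U C Uᵀ` is positive semidefinite (as `C` is CPD) and kills `1`, so it factors as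
`Bᵀ B` with `B 1 = 0`, and `Tr(C Uᵀ L U) = Tr(B L Bᵀ) = ∑ᵢ Bᵢ L Bᵢ` is a sum of values of the
CPD form of `L` at vectors summing to zero.
-/

open Matrix

theorem LinearMap.BilinForm.convexOn_self_apply {E : Type*} [AddCommGroup E] [Module ℝ E]
    (B : LinearMap.BilinForm ℝ E) {s : Set E} (hs : Convex ℝ s)
    (hB : ∀ x ∈ s, ∀ y ∈ s, 0 ≤ B (x - y) (x - y)) : ConvexOn ℝ s fun x => B x x := by
  refine ⟨hs, fun x hx y hy a b ha hb hab => ?_⟩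
  have hxy := mul_nonneg (mul_nonneg ha hb) (hB x hx y hy)
  obtain rfl : b = 1 - a := by linarith
  simp only [map_sub, map_add, map_smul, LinearMap.sub_apply, LinearMap.add_apply,
    LinearMap.smul_apply, smul_eq_mul] at hxy ⊢
  linear_combination hxy

namespace Matrix

variable {m n : Type*}

theorem diag_mul_mul_transpose {α : Type*} [CommSemiring α] [Fintype n] (B : Matrix m n α)
    (L : Matrix n n α) (i : m) : (B * L * Bᵀ) i i = B i ⬝ᵥ L *ᵥ B i := by
  rw [mul_apply', dotProduct_mulVec]
  rfl

variable [Fintype m] [Fintype n]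

/-- The paper's "CPD": the quadratic form is nonnegative on the hyperplane `∑ i, x i = 0`. -/
def CondPosSemidef (M : Matrix n n ℝ) : Prop :=
  ∀ x : n → ℝ, ∑ i, x i = 0 → 0 ≤ x ⬝ᵥ M *ᵥ x

theorem CondPosSemidef.posSemidef_mul_mul_transpose {C : Matrix n n ℝ} (hC : C.CondPosSemidef)
    (hCsymm : C.IsSymm) {U : Matrix m n ℝ} (hU : U *ᵥ 1 = 0) :
    (U * C * Uᵀ).PosSemidef := by
  refine .of_dotProduct_mulVec_nonneg ?_ fun x => ?_
  · simpa [IsHermitian, Matrix.mul_assoc] using congrArg (U * · * Uᵀ) hCsymm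
  · rw [star_trivial, ← mulVec_mulVec, ← mulVec_mulVec, dotProduct_mulVec, ← mulVec_transpose]
    refine hC _ ?_
    rw [← dotProduct_one, dotProduct_comm, dotProduct_mulVec, vecMul_transpose, hU,
      zero_dotProduct]

open scoped MatrixOrder in
theorem PosSemidef.trace_mul_nonneg_of_condPosSemidef {P L : Matrix m m ℝ} (hP : P.PosSemidef)
    (hP1 : P *ᵥ 1 = 0) (hL : L.CondPosSemidef) : 0 ≤ trace (P * L) := by
  classical
  obtain ⟨B, rfl⟩ := CStarAlgebra.nonneg_iff_eq_star_mul_self.mp hP.nonneg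
  rw [star_eq_conjTranspose, conjTranspose_eq_transpose_of_trivial] at hP1 ⊢
  have hB1 : B *ᵥ 1 = 0 := by
    rw [← dotProduct_self_eq_zero, ← dotProduct_transpose_mulVec, mulVec_mulVec, hP1,
      dotProduct_zero]
  rw [Matrix.mul_assoc, trace_mul_comm, trace]
  refine Finset.sum_nonneg fun i _ => ?_
  rw [diag_apply, diag_mul_mul_transpose]
  refine hL _ ?_
  simpa [mulVec, dotProduct] using congrFun hB1 i

theorem trace_mul_transpose_mul_mul_nonneg {C : Matrix n n ℝ} {L : Matrix m m ℝ}
    (hC : C.CondPosSemidef) (hCsymm : C.IsSymm) (hL : L.CondPosSemidef) {U : Matrix m n ℝ}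
    (hrow : U *ᵥ 1 = 0) (hcol : 1 ᵥ* U = 0) : 0 ≤ trace (C * Uᵀ * L * U) := by
  have hP1 : (U * C * Uᵀ) *ᵥ 1 = 0 := by
    rw [← mulVec_mulVec, mulVec_transpose, hcol, mulVec_zero]
  rw [trace_mul_comm, ← Matrix.mul_assoc, ← Matrix.mul_assoc]
  exact (hC.posSemidef_mul_mul_transpose hCsymm hrow).trace_mul_nonneg_of_condPosSemidef hP1 hL

def traceBilin (C : Matrix n n ℝ) (L : Matrix m m ℝ) : LinearMap.BilinForm ℝ (Matrix m n ℝ) :=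
  LinearMap.mk₂ ℝ (fun S T => trace (C * Sᵀ * L * T))
    (fun S S' T => by simp [Matrix.mul_add, Matrix.add_mul])
    (fun c S T => by simp)
    (fun S T T' => by simp [Matrix.mul_add])
    (fun c S T => by simp)

def couplings (r : m → ℝ) (c : n → ℝ) : Set (Matrix m n ℝ) :=
  {T | (∀ i j, 0 ≤ T i j) ∧ (∀ i, ∑ j, T i j = r i) ∧ ∀ j, ∑ i, T i j = c j}

variable {r : m → ℝ} {c : n → ℝ} {T : Matrix m n ℝ}

theorem mulVec_one_of_mem_couplings (hT : T ∈ couplings r c) : T *ᵥ 1 = r := by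
  ext i
  simpa [mulVec, dotProduct] using hT.2.1 i

theorem one_vecMul_of_mem_couplings (hT : T ∈ couplings r c) : 1 ᵥ* T = c := by
  ext j
  simpa [vecMul, dotProduct] using hT.2.2 j

theorem convex_couplings (r : m → ℝ) (c : n → ℝ) : Convex ℝ (couplings r c) := by
  intro T hT T' hT' a b ha hb hab
  refine ⟨fun i j => ?_, fun i => ?_, fun j => ?_⟩
  · simp only [Matrix.add_apply, Matrix.smul_apply, smul_eq_mul]
    exact add_nonneg (mul_nonneg ha (hT.1 i j)) (mul_nonneg hb (hT'.1 i j))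
  · simp only [Matrix.add_apply, Matrix.smul_apply, smul_eq_mul, Finset.sum_add_distrib,
      ← Finset.mul_sum, hT.2.1 i, hT'.2.1 i, ← add_mul, hab, one_mul]
  · simp only [Matrix.add_apply, Matrix.smul_apply, smul_eq_mul, Finset.sum_add_distrib,
      ← Finset.mul_sum, hT.2.2 j, hT'.2.2 j, ← add_mul, hab, one_mul]

theorem convexOn_couplings_traceBilin {C : Matrix n n ℝ} {L : Matrix m m ℝ}
    (hC : C.CondPosSemidef) (hCsymm : C.IsSymm) (hL : L.CondPosSemidef) :
    ConvexOn ℝ (couplings r c) fun T => traceBilin C L T T :=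
  (traceBilin C L).convexOn_self_apply (convex_couplings r c) fun T hT T' hT' =>
    trace_mul_transpose_mul_mul_nonneg hC hCsymm hL
      (by rw [sub_mulVec, mulVec_one_of_mem_couplings hT, mulVec_one_of_mem_couplings hT',
        sub_self])
      (by rw [vecMul_sub, one_vecMul_of_mem_couplings hT, one_vecMul_of_mem_couplings hT',
        sub_self])

end Matrix

theorem stmt18_general {N : ℕ} (CX K : Matrix (Fin N) (Fin N) ℝ)
    (hCXsym : CXᵀ = CX)
    (hCXcpd : ∀ x : Fin N → ℝ, (∑ i, x i) = 0 → 0 ≤ x ⬝ᵥ CX.mulVec x)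
    (hlogKcpd : ∀ x : Fin N → ℝ, (∑ i, x i) = 0 →
      0 ≤ x ⬝ᵥ (Matrix.of fun i j => Real.log (K i j)).mulVec x) :
    ConcaveOn ℝ
      {T : Matrix (Fin N) (Fin N) ℝ | (∀ i j, 0 ≤ T i j) ∧
        (∀ i, ∑ j, T i j = (N : ℝ)⁻¹) ∧ ∀ j, ∑ i, T i j = (N : ℝ)⁻¹}
      (fun T => -Matrix.trace (CX * Tᵀ * (Matrix.of fun i j => Real.log (K i j)) * T)) :=
  (convexOn_couplings_traceBilin (r := fun _ => (N : ℝ)⁻¹) (c := fun _ => (N : ℝ)⁻¹)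
    hCXcpd hCXsym hlogKcpd).neg

/-- with `C_X` CPD and `log K` CPD (entrywise log, `K > 0`), the map
`T ↦ −Tr(C_X Tᵀ log(K) T)` is concave on the coupling polytope `U(1/N, 1/N)`. -/
theorem stmt18 {N : ℕ} (CX K : Matrix (Fin N) (Fin N) ℝ)
    (hCXsym : CXᵀ = CX) (hKsym : Kᵀ = K) (hKpos : ∀ i j, 0 < K i j)
    (hCXcpd : ∀ x : Fin N → ℝ, (∑ i, x i) = 0 → 0 ≤ x ⬝ᵥ CX.mulVec x)
    (hlogKcpd : ∀ x : Fin N → ℝ, (∑ i, x i) = 0 →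
      0 ≤ x ⬝ᵥ (Matrix.of fun i j => Real.log (K i j)).mulVec x) :
    ConcaveOn ℝ
      {T : Matrix (Fin N) (Fin N) ℝ | (∀ i j, 0 ≤ T i j) ∧
        (∀ i, ∑ j, T i j = (N : ℝ)⁻¹) ∧ ∀ j, ∑ i, T i j = (N : ℝ)⁻¹}
      (fun T => -Matrix.trace (CX * Tᵀ * (Matrix.of fun i j => Real.log (K i j)) * T)) :=
  stmt18_general CX K hCXsym hCXcpd hlogKcpd
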